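/- arXiv:2603.00663 — 6 statements merged into one kernel-verified Lean document; each statement's English description precedes it below -/
import Mathlib

section
/- Consider a target moving along a trajectory τ : [a,b] → ℝ² that is L-Lipschitz with L ≤ v_max. If an agent trajectory of total length (cost) g reaches the point (τ(a), a) in a speed-admissible manner (speed at most v_max everywhere), then for every t_f ∈ [a,b] there exists a speed-admissible agent trajectory reaching (τ(t_f), t_f) with total length at most g + δ, where δ = ∫_a^b ‖τ′(s)‖ ds is the arc length of the target's path on [a,b]. -/
open scoped NNReal ENNReal

/-- If an agent can reach the start point `(τ a, a)` of a target segment with a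
speed-admissible trajectory of arc length at most `g`, then for every
`t_f ∈ [a,b]` it can reach `(τ t_f, t_f)` speed-admissibly with arc length at
most `g + δ`, where `δ` is the arc length of the target's path on `[a,b]`. -/
theorem stmt3 (vmax : ℝ≥0) (a b t0 : ℝ) (hab : a ≤ b) (ht0 : t0 ≤ a)
    (τ : ℝ → EuclideanSpace ℝ (Fin 2))
    (hτ : LipschitzOnWith vmax τ (Set.Icc a b))
    (τa : ℝ → EuclideanSpace ℝ (Fin 2))
    (hτa : LipschitzOnWith vmax τa (Set.Icc t0 a))
    (hmeet : τa a = τ a)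
    (g : ℝ≥0∞) (hg : eVariationOn τa (Set.Icc t0 a) ≤ g) :
    ∀ tf ∈ Set.Icc a b, ∃ σ : ℝ → EuclideanSpace ℝ (Fin 2),
      LipschitzOnWith vmax σ (Set.Icc t0 tf) ∧ σ tf = τ tf ∧
      eVariationOn σ (Set.Icc t0 tf) ≤ g + eVariationOn τ (Set.Icc a b) := by
  intro tf htf
  obtain ⟨hatf, htfb⟩ := htf
  set σ : ℝ → EuclideanSpace ℝ (Fin 2) := fun t => if t ≤ a then τa t else τ t with hσ
  have hσ1 : Set.EqOn σ τa (Set.Icc t0 a) := by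
    intro x hx; simp [σ, hx.2]
  have hσ2 : Set.EqOn σ τ (Set.Icc a tf) := by
    intro x hx
    rcases lt_or_eq_of_le hx.1 with h | h
    · simp [σ, not_le.mpr h]
    · simp [σ, ← h, hmeet]
  have key : ∀ x ∈ Set.Icc t0 tf, ∀ y ∈ Set.Icc t0 tf, x ≤ y →
      edist (σ x) (σ y) ≤ vmax * edist x y := by
    intro x hx y hy hxy
    rcases le_total y a with hya | hay
    · rw [hσ1 ⟨hx.1, hxy.trans hya⟩, hσ1 ⟨hy.1, hya⟩]
      exact hτa ⟨hx.1, hxy.trans hya⟩ ⟨hy.1, hya⟩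
    · rcases le_total x a with hxa | hax
      · calc edist (σ x) (σ y) ≤ edist (σ x) (σ a) + edist (σ a) (σ y) :=
              edist_triangle _ _ _
          _ ≤ vmax * edist x a + vmax * edist a y := by
              gcongr
              · rw [hσ1 ⟨hx.1, hxa⟩, hσ1 ⟨ht0, le_refl a⟩]
                exact hτa ⟨hx.1, hxa⟩ ⟨ht0, le_refl a⟩
              · rw [hσ2 ⟨le_refl a, hatf⟩, hσ2 ⟨hay, hy.2⟩]
                exact hτ ⟨le_refl a, hatf.trans htfb⟩ ⟨hay, hy.2.trans htfb⟩
          _ = vmax * (edist x a + edist a y) := by ring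
          _ = vmax * edist x y := by
              congr 1
              rw [edist_dist, edist_dist, edist_dist, Real.dist_eq, Real.dist_eq,
                Real.dist_eq, abs_of_nonpos (by linarith), abs_of_nonpos (by linarith),
                abs_of_nonpos (by linarith), ← ENNReal.ofReal_add (by linarith) (by linarith)]
              ring_nf
      · rw [hσ2 ⟨hax, hx.2⟩, hσ2 ⟨hax.trans hxy, hy.2⟩]
        exact hτ ⟨hax, hx.2.trans htfb⟩ ⟨hax.trans hxy, hy.2.trans htfb⟩
  refine ⟨σ, ?_, hσ2 ⟨hatf, le_refl tf⟩ ▸ rfl, ?_⟩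
  · intro x hx y hy
    rcases le_total x y with h | h
    · exact key x hx y hy h
    · rw [edist_comm, edist_comm x y]; exact key y hy x hx h
  · have hsplit := eVariationOn.Icc_add_Icc σ (s := Set.univ) ht0 hatf (Set.mem_univ a)
    simp only [Set.univ_inter] at hsplit
    rw [← hsplit, eVariationOn.eq_of_eqOn hσ1, eVariationOn.eq_of_eqOn hσ2]
    gcongr
    exact eVariationOn.mono τ (Set.Icc_subset_Icc le_rfl htfb)
end

section
/- Bellman update soundness for upper bounds: Suppose numbers g_ub[k] satisfy: for each k with g_ub[k] < ∞, there exists a speed-admissible trajectory executing Γ and intercepting segment ξ_k exactly at its start point s_k with cost at most g_ub[k]. Define c_start(s_k, s′_{k′}) = ‖position(s′_{k′}) − position(s_k)‖ if a speed-admissible straight-line trajectory from s_k to s′_{k′} exists (i.e., the distance is at most v_max times the time difference and the time ordering is respected), and ∞ otherwise. Then g_ub′[k′] := min_k (g_ub[k] + c_start(s_k, s′_{k′})) satisfies: if g_ub′[k′] < ∞, there exists a speed-admissible trajectory executing Γ followed by the new target-window, intercepting segment ξ′_{k′} at its start point, with cost at most g_ub′[k′]. -/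
open scoped NNReal ENNReal

/-- Cost of the straight-line trajectory between two space-time points, `∞` if
it violates the time ordering or the speed limit. -/
noncomputable def cstart (vmax : ℝ≥0)
    (a b : EuclideanSpace ℝ (Fin 2) × ℝ) : ℝ≥0∞ :=
  if a.2 ≤ b.2 ∧ ‖b.1 - a.1‖ ≤ (vmax : ℝ) * (b.2 - a.2)
  then (‖b.1 - a.1‖₊ : ℝ≥0∞) else ⊤

/-- Bellman update soundness for upper bounds: if each finite `gub k` is
witnessed by a speed-admissible trajectory executing `Γ` (encoded by `Good`)
and reaching the segment start point `s k`, then whenever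
`min_k (gub k + cstart (s k) s') < ∞` there is a speed-admissible trajectory
executing `Γ`, reaching the new start point `s'`, of cost at most that min. -/
theorem stmt7 (vmax : ℝ≥0) {ι : Type*} [Fintype ι] [Nonempty ι]
    (s : ι → EuclideanSpace ℝ (Fin 2) × ℝ) (s' : EuclideanSpace ℝ (Fin 2) × ℝ)
    (Good : (ℝ → EuclideanSpace ℝ (Fin 2)) → ℝ → Prop)
    (hmonoGood : ∀ τ T T', T ≤ T' → Good τ T → Good τ T')
    (hagree : ∀ τ τ' T, (∀ u ≤ T, τ' u = τ u) → Good τ T → Good τ' T)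
    (gub : ι → ℝ≥0∞)
    (hub : ∀ k, gub k < ⊤ → ∃ (t0 : ℝ) (τ : ℝ → EuclideanSpace ℝ (Fin 2)),
      t0 ≤ (s k).2 ∧ LipschitzOnWith vmax τ (Set.Icc t0 (s k).2) ∧
      Good τ (s k).2 ∧ τ (s k).2 = (s k).1 ∧
      eVariationOn τ (Set.Icc t0 (s k).2) ≤ gub k) :
    (⨅ k, gub k + cstart vmax (s k) s') < ⊤ →
      ∃ (t0 : ℝ) (τ : ℝ → EuclideanSpace ℝ (Fin 2)),
        t0 ≤ s'.2 ∧ LipschitzOnWith vmax τ (Set.Icc t0 s'.2) ∧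
        Good τ s'.2 ∧ τ s'.2 = s'.1 ∧
        eVariationOn τ (Set.Icc t0 s'.2) ≤ ⨅ k, gub k + cstart vmax (s k) s' := by
  classical
  intro hlt
  obtain ⟨k, hk⟩ := Finite.exists_min fun k => gub k + cstart vmax (s k) s'
  have hinf : (⨅ k, gub k + cstart vmax (s k) s') = gub k + cstart vmax (s k) s' :=
    le_antisymm (iInf_le _ k) (le_iInf hk)
  rw [hinf] at hlt ⊢
  have hgub : gub k < ⊤ := lt_of_le_of_lt le_self_add hlt
  have hcs : cstart vmax (s k) s' < ⊤ := lt_of_le_of_lt le_add_self hlt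
  by_cases hcond : (s k).2 ≤ s'.2 ∧ ‖s'.1 - (s k).1‖ ≤ (vmax : ℝ) * (s'.2 - (s k).2)
  swap
  · rw [cstart, if_neg hcond] at hcs; exact absurd hcs (lt_irrefl _)
  have hcseq : cstart vmax (s k) s' = (‖s'.1 - (s k).1‖₊ : ℝ≥0∞) := by
    rw [cstart, if_pos hcond]
  obtain ⟨ht, hspeed⟩ := hcond
  obtain ⟨t0, τ, ht0, hlip, hgood, hend, hvar⟩ := hub k hgub
  set a := (s k).2 with ha
  set d := s'.1 - (s k).1 with hd
  set Δ := s'.2 - a with hΔdef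
  have hΔ : 0 ≤ Δ := sub_nonneg.2 ht
  set L : ℝ → EuclideanSpace ℝ (Fin 2) := fun u => τ a + ((u - a) / Δ) • d with hLdef
  set τ' : ℝ → EuclideanSpace ℝ (Fin 2) := fun u => if u ≤ a then τ u else L u with hτ'def
  have hLa : L a = τ a := by simp [hLdef]
  have heq_on : ∀ u ≤ a, τ' u = τ u := fun u hu => if_pos hu
  -- value at s'.2
  have hLs' : L s'.2 = s'.1 := by
    by_cases hΔ0 : Δ = 0
    · have hd0 : d = 0 := by
        have h2 := hspeed; rw [hΔ0, mul_zero] at h2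
        exact norm_le_zero_iff.1 h2
      have hs1 : s'.1 = (s k).1 := by
        have := hd0; rw [hd, sub_eq_zero] at this; exact this
      simp [hLdef, hd0, hs1, hend]
    · have : (s'.2 - a) / Δ = 1 := by rw [← hΔdef]; exact div_self hΔ0
      simp [hLdef, this, hend, hd]
  have hτ's' : τ' s'.2 = s'.1 := by
    by_cases h : s'.2 ≤ a
    · have haeq : a = s'.2 := le_antisymm ht h
      rw [heq_on _ h, ← haeq, hend]
      have hΔ0 : Δ = 0 := by rw [hΔdef, ← haeq, sub_self]
      have h2 := hspeed; rw [hΔ0, mul_zero] at h2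
      have hd0 : d = 0 := norm_le_zero_iff.1 h2
      rw [hd, sub_eq_zero] at hd0; exact hd0.symm
    · show (if s'.2 ≤ a then τ s'.2 else L s'.2) = s'.1
      rw [if_neg h]; exact hLs'
  -- Lipschitz bound for the line L
  have hLlip : ∀ x y : ℝ, dist (L x) (L y) ≤ (vmax : ℝ) * dist x y := by
    intro x y
    have hsub : L x - L y = ((x - y) / Δ) • d := by
      rw [hLdef]
      simp only
      rw [add_sub_add_left_eq_sub, ← sub_smul]
      congr 1; ring
    rw [dist_eq_norm, hsub, norm_smul, Real.norm_eq_abs, Real.dist_eq]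
    by_cases hΔ0 : Δ = 0
    · have h2 := hspeed; rw [hΔ0, mul_zero] at h2
      have hd0 : ‖d‖ = 0 := le_antisymm h2 (norm_nonneg _)
      rw [hd0, mul_zero]
      positivity
    · have hΔpos : 0 < Δ := lt_of_le_of_ne hΔ (Ne.symm hΔ0)
      have h1 : |(x - y) / Δ| = |x - y| / Δ := by
        rw [abs_div, abs_of_pos hΔpos]
      rw [h1]
      rw [div_mul_eq_mul_div, div_le_iff₀ hΔpos]
      have hsp : ‖d‖ ≤ (vmax : ℝ) * Δ := hspeed
      have habs : 0 ≤ |x - y| := abs_nonneg _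
      nlinarith [norm_nonneg d]
  have hlip' : ∀ x ∈ Set.Icc t0 a, ∀ y ∈ Set.Icc t0 a,
      dist (τ x) (τ y) ≤ (vmax : ℝ) * dist x y := by
    intro x hx y hy
    exact lipschitzOnWith_iff_dist_le_mul.1 hlip x hx y hy
  -- Lipschitz of τ'
  have key : ∀ x ∈ Set.Icc t0 s'.2, ∀ y ∈ Set.Icc t0 s'.2, x ≤ y →
      dist (τ' x) (τ' y) ≤ (vmax : ℝ) * dist x y := by
    intro x hx y hy hxy
    by_cases hya : y ≤ a
    · rw [heq_on x (hxy.trans hya), heq_on y hya]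
      exact hlip' x ⟨hx.1, hxy.trans hya⟩ y ⟨hy.1, hya⟩
    · have hτ'y : τ' y = L y := if_neg hya
      push_neg at hya
      by_cases hxa : x ≤ a
      · rw [heq_on x hxa, hτ'y]
        calc dist (τ x) (L y) ≤ dist (τ x) (τ a) + dist (τ a) (L y) := dist_triangle _ _ _
          _ ≤ (vmax : ℝ) * dist x a + (vmax : ℝ) * dist a y := by
              refine add_le_add (hlip' x ⟨hx.1, hxa⟩ a ⟨ht0, le_rfl⟩) ?_
              rw [← hLa]; exact hLlip a y
          _ ≤ (vmax : ℝ) * dist x y := by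
              rw [Real.dist_eq, Real.dist_eq, Real.dist_eq,
                abs_of_nonpos (by linarith), abs_of_nonpos (by linarith : a - y ≤ 0),
                abs_of_nonpos (by linarith : x - y ≤ 0)]
              have : (vmax : ℝ) ≥ 0 := vmax.coe_nonneg
              nlinarith
      · have hτ'x : τ' x = L x := if_neg hxa
        rw [hτ'y, hτ'x]
        exact hLlip x y
  have hτ'lip : LipschitzOnWith vmax τ' (Set.Icc t0 s'.2) := by
    rw [lipschitzOnWith_iff_dist_le_mul]
    intro x hx y hy
    rcases le_total x y with h | h
    · exact key x hx y hy h
    · rw [dist_comm (τ' x), dist_comm x]; exact key y hy x hx h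
  -- Goodness
  have hgood' : Good τ' s'.2 :=
    hmonoGood τ' a s'.2 ht (hagree τ τ' a heq_on hgood)
  -- Variation bound on the line part
  have hvar2 : eVariationOn τ' (Set.Icc a s'.2) ≤ (‖d‖₊ : ℝ≥0∞) := by
    set f : ℝ → EuclideanSpace ℝ (Fin 2) := fun r => τ a + r • d with hfdef
    set g : ℝ → ℝ := fun u => (u - a) / Δ with hgdef
    have heqfg : Set.EqOn τ' (f ∘ g) (Set.Icc a s'.2) := by
      intro u hu
      by_cases hua : u ≤ a
      · have : u = a := le_antisymm hua hu.1
        subst this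
        simp [hτ'def, hfdef, hgdef]
      · show (if u ≤ a then τ u else L u) = _
        rw [if_neg hua]; rfl
    rw [eVariationOn.eq_of_eqOn heqfg]
    have hf : LipschitzWith ‖d‖₊ f := by
      apply LipschitzWith.of_dist_le_mul
      intro x y
      rw [dist_eq_norm, hfdef]
      simp only
      rw [add_sub_add_left_eq_sub, ← sub_smul, norm_smul, Real.norm_eq_abs, Real.dist_eq,
        coe_nnnorm, mul_comm]
    have hg : MonotoneOn g (Set.Icc a s'.2) := by
      intro x _ y _ hxy
      rw [hgdef]
      simp only
      gcongr
    have h1 : eVariationOn (f ∘ g) (Set.Icc a s'.2) ≤ ‖d‖₊ * eVariationOn g (Set.Icc a s'.2) :=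
      (hf.lipschitzOnWith (s := Set.univ)).comp_eVariationOn_le (Set.mapsTo_univ _ _)
    have h2 : eVariationOn g (Set.Icc a s'.2) ≤ ENNReal.ofReal (g s'.2 - g a) := by
      have := hg.eVariationOn_le (Set.left_mem_Icc.2 ht) (Set.right_mem_Icc.2 ht)
      rwa [Set.inter_self] at this
    have h3 : ENNReal.ofReal (g s'.2 - g a) ≤ 1 := by
      rw [hgdef]
      simp only [sub_self, zero_div, sub_zero]
      rw [← hΔdef]
      refine ENNReal.ofReal_le_one.2 ?_
      rcases eq_or_ne Δ 0 with h | h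
      · simp [h]
      · rw [div_self h]
    calc eVariationOn (f ∘ g) (Set.Icc a s'.2) ≤ ‖d‖₊ * eVariationOn g (Set.Icc a s'.2) := h1
      _ ≤ ‖d‖₊ * 1 := by exact mul_le_mul_right (h2.trans h3) _
      _ = (‖d‖₊ : ℝ≥0∞) := mul_one _
  -- total variation
  have hvar1 : eVariationOn τ' (Set.Icc t0 a) ≤ gub k := by
    rw [eVariationOn.eq_of_eqOn (fun u hu => heq_on u hu.2)]
    exact hvar
  have hsplit := eVariationOn.Icc_add_Icc τ' (s := Set.Icc t0 s'.2) ht0 ht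
    (Set.mem_Icc.2 ⟨ht0, ht⟩)
  have hi1 : Set.Icc t0 s'.2 ∩ Set.Icc t0 a = Set.Icc t0 a :=
    Set.inter_eq_right.2 (Set.Icc_subset_Icc_right ht)
  have hi2 : Set.Icc t0 s'.2 ∩ Set.Icc a s'.2 = Set.Icc a s'.2 :=
    Set.inter_eq_right.2 (Set.Icc_subset_Icc_left ht0)
  have hi3 : Set.Icc t0 s'.2 ∩ Set.Icc t0 s'.2 = Set.Icc t0 s'.2 := Set.inter_self _
  rw [hi1, hi2, hi3] at hsplit
  refine ⟨t0, τ', ht0.trans ht, hτ'lip, hgood', hτ's', ?_⟩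
  rw [← hsplit, hcseq]
  exact add_le_add hvar1 hvar2
end

section
/- Minimum execution time via EFAT recursion: Define for a space-time point (q,t) and a target-window γ′ the earliest feasible arrival time EFAT(q,t,γ′) as the smallest t′ in the window of γ′ such that ‖position of γ′ at t′ − q‖ ≤ v_max(t′ − t) (and ∞ if none exists). Let Γ be a partial tour and suppose t is the minimum over all speed-admissible trajectories executing Γ of the interception time at Γ's final target-window γ_{i,j}, where the target's position at time t is τ_i(t). If the target trajectory τ_i moves with speed at most v_max within its window, then the minimum over all speed-admissible trajectories executing the extended partial tour Γ·γ_{i′,j′} of the interception time at γ_{i′,j′} equals EFAT(τ_i(t), t, γ_{i′,j′}). -/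
open scoped NNReal ENNReal

/-- Gluing two Lipschitz functions that agree at the junction point. -/
lemma glue_lipschitz {E : Type*} [MetricSpace E] (K : ℝ≥0) (f g : ℝ → E) (c : ℝ)
    (hf : LipschitzWith K f) (hg : LipschitzWith K g) (hc : f c = g c) :
    LipschitzWith K (fun x => if x ≤ c then f x else g x) := by
  rw [lipschitzWith_iff_dist_le_mul]
  have key : ∀ x y, x ≤ y →
      dist (if x ≤ c then f x else g x) (if y ≤ c then f y else g y) ≤ K * dist x y := by
    intro x y hxy
    by_cases hx : x ≤ c <;> by_cases hy : y ≤ c <;>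
      simp only [hx, hy, if_true, if_false]
    · exact hf.dist_le_mul x y
    · have h1 : dist (f x) (g y) ≤ dist (f x) (f c) + dist (g c) (g y) := by
        calc dist (f x) (g y) ≤ dist (f x) (f c) + dist (f c) (g y) := dist_triangle _ _ _
          _ = dist (f x) (f c) + dist (g c) (g y) := by rw [hc]
      have h2 := hf.dist_le_mul x c
      have h3 := hg.dist_le_mul c y
      have hxc : dist x c = c - x := by
        rw [Real.dist_eq, abs_of_nonpos (by linarith)]; ring
      have hcy : dist c y = y - c := by
        rw [Real.dist_eq, abs_of_nonpos (by linarith)]; ring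
      have hxy' : dist x y = y - x := by
        rw [Real.dist_eq, abs_of_nonpos (by linarith)]; ring
      rw [hxc] at h2; rw [hcy] at h3; rw [hxy']
      have hK : (0:ℝ) ≤ K := K.coe_nonneg
      nlinarith
    · exact absurd (hxy.trans hy) hx
    · exact hg.dist_le_mul x y
  intro x y
  rcases le_total x y with h | h
  · exact key x y h
  · rw [dist_comm, dist_comm (x:ℝ) y]; exact key y x h

/-- Minimum execution time via the EFAT recursion: if `t` is the minimum
interception time of `Γ`'s final target-window (with target trajectory `τi`,
`v_max`-Lipschitz on its window), then the minimum interception time of the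
new target-window `γ' = (τ', [a',b'])` over all speed-admissible trajectories
executing the extended partial tour equals
`EFAT(τi t, t, γ') = min { t' ∈ [a',b'] | t ≤ t' ∧ ‖τ' t' − τi t‖ ≤ v_max (t' − t) }`. -/
theorem stmt8 (vmax : ℝ≥0)
    (τi τ' : ℝ → EuclideanSpace ℝ (Fin 2)) (ai bi a' b' : ℝ)
    (ExecΓ : (ℝ → EuclideanSpace ℝ (Fin 2)) → ℝ → Prop)
    (hτi : LipschitzOnWith vmax τi (Set.Icc ai bi))
    (hExec : ∀ τa u, ExecΓ τa u →
      LipschitzWith vmax τa ∧ u ∈ Set.Icc ai bi ∧ τa u = τi u)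
    (hext : ∀ τa τb u, ExecΓ τa u → (∀ v ≤ u, τb v = τa v) →
      LipschitzWith vmax τb → ExecΓ τb u)
    (t : ℝ)
    (ht : IsLeast {u | ∃ τa, ExecΓ τa u} t) :
    sInf {t'' | ∃ τa u, ExecΓ τa u ∧ u ≤ t'' ∧ t'' ∈ Set.Icc a' b' ∧ τa t'' = τ' t''}
      = sInf {t' | t' ∈ Set.Icc a' b' ∧ t ≤ t' ∧
          ‖τ' t' - τi t‖ ≤ (vmax : ℝ) * (t' - t)} := by
  obtain ⟨τ0, hτ0⟩ := ht.1
  obtain ⟨hL0, htmem, heq0⟩ := hExec τ0 t hτ0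
  have hset : {t'' | ∃ τa u, ExecΓ τa u ∧ u ≤ t'' ∧ t'' ∈ Set.Icc a' b' ∧ τa t'' = τ' t''}
      = {t' | t' ∈ Set.Icc a' b' ∧ t ≤ t' ∧
          ‖τ' t' - τi t‖ ≤ (vmax : ℝ) * (t' - t)} := by
    ext s
    constructor
    · rintro ⟨τa, u, hE, hus, hsmem, heq⟩
      obtain ⟨hLa, humem, hequ⟩ := hExec τa u hE
      have htu : t ≤ u := ht.2 ⟨τa, hE⟩
      refine ⟨hsmem, htu.trans hus, ?_⟩
      have h1 : dist (τa s) (τa u) ≤ vmax * dist s u := hLa.dist_le_mul s u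
      have h2 : dist (τi u) (τi t) ≤ vmax * dist u t := hτi.dist_le_mul u humem t htmem
      have hsu : dist s u = s - u := by
        rw [Real.dist_eq, abs_of_nonneg (by linarith)]
      have hut : dist u t = u - t := by
        rw [Real.dist_eq, abs_of_nonneg (by linarith)]
      rw [hsu] at h1; rw [hut] at h2
      have htri : ‖τ' s - τi t‖ ≤ dist (τa s) (τa u) + dist (τi u) (τi t) := by
        rw [← heq]
        calc ‖τa s - τi t‖ = dist (τa s) (τi t) := (dist_eq_norm _ _).symm
          _ ≤ dist (τa s) (τi u) + dist (τi u) (τi t) := dist_triangle _ _ _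
          _ = dist (τa s) (τa u) + dist (τi u) (τi t) := by rw [← hequ]
      have hK : (0:ℝ) ≤ vmax := vmax.coe_nonneg
      nlinarith
    · rintro ⟨hsmem, hts, hnorm⟩
      rcases eq_or_lt_of_le hts with rfl | hlt
      · -- s = t : the target is already at the right place
        have : τ' t = τi t := by
          have : ‖τ' t - τi t‖ ≤ 0 := by simpa using hnorm
          have := le_antisymm this (norm_nonneg _)
          simpa [sub_eq_zero] using this
        exact ⟨τ0, t, hτ0, le_refl t, hsmem, by rw [heq0, this]⟩
      · -- s > t : ride along a straight segment from τi t to τ' s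
        set d : EuclideanSpace ℝ (Fin 2) := τ' s - τi t with hd
        set g : ℝ → EuclideanSpace ℝ (Fin 2) :=
          fun v => τi t + ((min v s - t) / (s - t)) • d with hg
        have hst : (0:ℝ) < s - t := by linarith
        have hgL : LipschitzWith vmax g := by
          rw [lipschitzWith_iff_dist_le_mul]
          intro x y
          have hmin : |min x s - min y s| ≤ |x - y| := by
            have h1 := le_abs_self (x - y)
            have h2 := neg_abs_le (x - y)
            rcases le_total x s with hx | hx <;> rcases le_total y s with hy | hy <;>
              rw [abs_le] <;> constructor <;>
              simp [min_eq_left, min_eq_right, hx, hy] <;> linarith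
          have hcalc : dist (g x) (g y) = |min x s - min y s| / (s - t) * ‖d‖ := by
            rw [hg, dist_eq_norm]
            have : τi t + ((min x s - t) / (s - t)) • d -
                (τi t + ((min y s - t) / (s - t)) • d)
                = ((min x s - min y s) / (s - t)) • d := by
              rw [add_sub_add_left_eq_sub, ← sub_smul]
              congr 1
              ring
            rw [this, norm_smul, Real.norm_eq_abs, abs_div,
              abs_of_pos hst]
          rw [hcalc, Real.dist_eq]
          have hdle : ‖d‖ ≤ (vmax : ℝ) * (s - t) := hnorm
          have hK : (0:ℝ) ≤ vmax := vmax.coe_nonneg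
          have hdn : (0:ℝ) ≤ ‖d‖ := norm_nonneg _
          rw [div_mul_eq_mul_div, div_le_iff₀ hst]
          have hmul := mul_le_mul hmin hdle hdn (abs_nonneg (x - y))
          nlinarith [hmul]
        have hgt : τ0 t = g t := by
          rw [hg, heq0]
          simp [min_eq_left hlt.le]
        set τb : ℝ → EuclideanSpace ℝ (Fin 2) := fun v => if v ≤ t then τ0 v else g v with hτb
        have hbL : LipschitzWith vmax τb := glue_lipschitz vmax τ0 g t hL0 hgL hgt
        have hbE : ExecΓ τb t := hext τ0 τb t hτ0 (fun v hv => if_pos hv) hbL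
        refine ⟨τb, t, hbE, hts, hsmem, ?_⟩
        have : τb s = g s := if_neg (not_le.mpr hlt)
        rw [this, hg]
        simp only [min_self]
        rw [div_self (ne_of_gt hst), one_smul, hd]
        abel
  rw [hset]
end

section
/- Monotonicity/consistency of LFDT and EFAT: define the latest feasible departure time LFDT(γ, γ′) as the maximum t in the window of γ such that EFAT(τ(t), t, γ′) < ∞, where τ is the trajectory of γ's target. If an agent intercepts γ at time t ≤ LFDT(γ, γ′), then it can subsequently intercept γ′; conversely if t > LFDT(γ, γ′) then no speed-admissible continuation from the interception of γ at time t can intercept γ′. (Here the set {t in the window of γ : EFAT(τ(t),t,γ′) < ∞} is a closed initial segment of the window, because the target of γ moves with speed at most v_max.) -/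
open scoped NNReal ENNReal

/-- Earliest feasible arrival time from the space-time point `(q,t)` at the
target-window with trajectory `τ'` and window `[a',b']` (`⊤` if unreachable). -/
noncomputable def efat (vmax : ℝ≥0) (q : EuclideanSpace ℝ (Fin 2)) (t : ℝ)
    (τ' : ℝ → EuclideanSpace ℝ (Fin 2)) (a' b' : ℝ) : EReal :=
  sInf {x : EReal | ∃ t' : ℝ, x = (t' : EReal) ∧ t' ∈ Set.Icc a' b' ∧
    t ≤ t' ∧ ‖τ' t' - q‖ ≤ (vmax : ℝ) * (t' - t)}

lemma efat_ne_top_iff (vmax : ℝ≥0) (q : EuclideanSpace ℝ (Fin 2)) (t : ℝ)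
    (τ' : ℝ → EuclideanSpace ℝ (Fin 2)) (a' b' : ℝ) :
    efat vmax q t τ' a' b' ≠ ⊤ ↔
      ∃ t' ∈ Set.Icc a' b', t ≤ t' ∧ ‖τ' t' - q‖ ≤ (vmax : ℝ) * (t' - t) := by
  constructor
  · intro h
    by_contra hc
    push_neg at hc
    have : {x : EReal | ∃ t' : ℝ, x = (t' : EReal) ∧ t' ∈ Set.Icc a' b' ∧
        t ≤ t' ∧ ‖τ' t' - q‖ ≤ (vmax : ℝ) * (t' - t)} = ∅ := by
      ext x
      simp only [Set.mem_setOf_eq, Set.mem_empty_iff_false, iff_false]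
      rintro ⟨t', rfl, h1, h2, h3⟩
      exact absurd h3 (not_le.mpr (hc t' h1 h2))
    rw [efat, this, sInf_empty] at h
    exact h rfl
  · rintro ⟨t', h1, h2, h3⟩
    intro htop
    have hmem : (t' : EReal) ∈ {x : EReal | ∃ t' : ℝ, x = (t' : EReal) ∧ t' ∈ Set.Icc a' b' ∧
        t ≤ t' ∧ ‖τ' t' - q‖ ≤ (vmax : ℝ) * (t' - t)} := ⟨t', rfl, h1, h2, h3⟩
    have := sInf_le hmem
    rw [efat] at htop
    rw [htop] at this
    exact absurd (top_le_iff.mp this) (EReal.coe_ne_top t')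

/-- Consistency of LFDT with EFAT: the set of departure times in the window of
`γ` from which `γ'` is reachable is a closed initial segment of the window, so
with `LFDT = sSup` of that set, departing at `t ≤ LFDT` allows a subsequent
interception of `γ'` while departing at `t > LFDT` does not. -/
theorem stmt10 (vmax : ℝ≥0)
    (τ τ' : ℝ → EuclideanSpace ℝ (Fin 2)) (a b a' b' : ℝ) (hab : a ≤ b)
    (hτ : LipschitzOnWith vmax τ (Set.Icc a b))
    (hτ' : LipschitzOnWith vmax τ' (Set.Icc a' b'))
    (hne : ∃ t ∈ Set.Icc a b, efat vmax (τ t) t τ' a' b' ≠ ⊤) :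
    ∀ t ∈ Set.Icc a b,
      (t ≤ sSup {s | s ∈ Set.Icc a b ∧ efat vmax (τ s) s τ' a' b' ≠ ⊤} →
        efat vmax (τ t) t τ' a' b' ≠ ⊤) ∧
      (sSup {s | s ∈ Set.Icc a b ∧ efat vmax (τ s) s τ' a' b' ≠ ⊤} < t →
        efat vmax (τ t) t τ' a' b' = ⊤) := by
  set S := {s | s ∈ Set.Icc a b ∧ efat vmax (τ s) s τ' a' b' ≠ ⊤} with hS
  have hSne : S.Nonempty := by
    obtain ⟨t, ht, h⟩ := hne; exact ⟨t, ht, h⟩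
  have hSbdd : BddAbove S := ⟨b, fun s hs => hs.1.2⟩
  -- downward closedness
  have hdown : ∀ s ∈ S, ∀ t ∈ Set.Icc a b, t ≤ s → t ∈ S := by
    rintro s ⟨hsab, hs⟩ t htab hts
    refine ⟨htab, ?_⟩
    rw [efat_ne_top_iff] at hs ⊢
    obtain ⟨t', h1, h2, h3⟩ := hs
    refine ⟨t', h1, hts.trans h2, ?_⟩
    have htri : ‖τ' t' - τ t‖ ≤ ‖τ' t' - τ s‖ + ‖τ s - τ t‖ := by
      calc ‖τ' t' - τ t‖ = ‖(τ' t' - τ s) + (τ s - τ t)‖ := by rw [sub_add_sub_cancel]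
        _ ≤ ‖τ' t' - τ s‖ + ‖τ s - τ t‖ := norm_add_le _ _
    have hlip : ‖τ s - τ t‖ ≤ (vmax : ℝ) * (s - t) := by
      have := hτ.dist_le_mul s hsab t htab
      rw [dist_eq_norm] at this
      rw [Real.dist_eq, abs_of_nonneg (by linarith)] at this
      exact this
    calc ‖τ' t' - τ t‖ ≤ ‖τ' t' - τ s‖ + ‖τ s - τ t‖ := htri
      _ ≤ (vmax : ℝ) * (t' - s) + (vmax : ℝ) * (s - t) := add_le_add h3 hlip
      _ = (vmax : ℝ) * (t' - t) := by ring
  -- sSup S ∈ S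
  have hsupab : sSup S ∈ Set.Icc a b := by
    obtain ⟨t0, ht0⟩ := id hSne
    exact ⟨ht0.1.1.trans (le_csSup hSbdd ht0), csSup_le hSne fun s hs => hs.1.2⟩
  have hsupS : sSup S ∈ S := by
    obtain ⟨u, hmono, htend, hmem⟩ := exists_seq_tendsto_sSup hSne hSbdd
    -- witnesses
    have hw : ∀ n, ∃ t' ∈ Set.Icc a' b', u n ≤ t' ∧
        ‖τ' t' - τ (u n)‖ ≤ (vmax : ℝ) * (t' - u n) := fun n =>
      (efat_ne_top_iff _ _ _ _ _ _).mp (hmem n).2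
    choose w hw1 hw2 hw3 using hw
    obtain ⟨c, hc, φ, hφ, hcw⟩ := (isCompact_Icc (a := a') (b := b')).tendsto_subseq hw1
    refine ⟨hsupab, (efat_ne_top_iff _ _ _ _ _ _).mpr ⟨c, hc, ?_, ?_⟩⟩
    · have h1 : Filter.Tendsto (fun n => u (φ n)) Filter.atTop (nhds (sSup S)) :=
        htend.comp hφ.tendsto_atTop
      exact le_of_tendsto_of_tendsto h1 hcw (Filter.Eventually.of_forall fun n => hw2 (φ n))
    · have hτcont : Filter.Tendsto (fun n => τ (u (φ n))) Filter.atTop (nhds (τ (sSup S))) := by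
        have hcw' : Filter.Tendsto (fun n => u (φ n)) Filter.atTop
            (nhdsWithin (sSup S) (Set.Icc a b)) :=
          tendsto_nhdsWithin_of_tendsto_nhds_of_eventually_within _
            (htend.comp hφ.tendsto_atTop)
            (Filter.Eventually.of_forall fun n => (hmem (φ n)).1)
        exact ((hτ.continuousOn (sSup S) hsupab).tendsto).comp hcw'
      have hτ'cont : Filter.Tendsto (fun n => τ' (w (φ n))) Filter.atTop (nhds (τ' c)) := by
        have hcw' : Filter.Tendsto (fun n => w (φ n)) Filter.atTop
            (nhdsWithin c (Set.Icc a' b')) :=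
          tendsto_nhdsWithin_of_tendsto_nhds_of_eventually_within _ hcw
            (Filter.Eventually.of_forall fun n => hw1 (φ n))
        exact ((hτ'.continuousOn c hc).tendsto).comp hcw'
      have hlhs : Filter.Tendsto (fun n => ‖τ' (w (φ n)) - τ (u (φ n))‖)
          Filter.atTop (nhds ‖τ' c - τ (sSup S)‖) :=
        (hτ'cont.sub hτcont).norm
      have hrhs : Filter.Tendsto (fun n => (vmax : ℝ) * (w (φ n) - u (φ n)))
          Filter.atTop (nhds ((vmax : ℝ) * (c - sSup S))) :=
        (hcw.sub (htend.comp hφ.tendsto_atTop)).const_mul _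
      exact le_of_tendsto_of_tendsto hlhs hrhs
        (Filter.Eventually.of_forall fun n => hw3 (φ n))
  intro t htab
  constructor
  · intro hle
    exact (hdown _ hsupS t htab hle).2
  · intro hlt
    by_contra h
    have : t ∈ S := ⟨htab, h⟩
    exact absurd (le_csSup hSbdd this) (not_le.mpr hlt)
end

section
/- Substitutability invariant preserved by starting a new tour: let P = (Γ¹,…,Γ^M) be a fixed feasible solution (sequence of tours). If an m-label u = (γ, t, σ, b, n) with n < M is substitutable into P (conditions: n ≤ M; γ ∈ Γⁿ; some admissible execution of Γⁿ intercepts γ no earlier than t; σ is at most the demand accumulated by Γⁿ up to the first occurrence of γ; every target flagged in b is visited by Γⁿ at or before γ or by some Γʲ with j < n), and γ is the second-to-last element of Γⁿ, then the m-label u′ = (γ₀, 0, 0, b, n+1) is substitutable into P, where γ₀ is the depot node. -/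
/-- The prefix of `L` up to (and including) the first occurrence of `γ`. -/
def prefixUpTo {Node : Type*} [DecidableEq Node] (γ : Node) (L : List Node) :
    List Node :=
  L.takeWhile (fun x => x ≠ γ) ++ [γ]

/-- Substitutability of the m-label `(γ, t, σ, b, n)` into the fixed feasible
solution `P = (Γ¹, …, Γ^M)`. -/
def Substitutable {Node : Type*} [DecidableEq Node] {m : ℕ} (M : ℕ)
    (P : ℕ → List Node) (Intc : List Node → Node → ℝ → Prop)
    (d : Node → ℝ) (tgt : Node → Option (Fin m))
    (γ : Node) (t σ : ℝ) (b : Fin m → Bool) (n : ℕ) : Prop :=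
  1 ≤ n ∧ n ≤ M ∧ γ ∈ P n ∧ Intc (P n) γ t ∧
  σ ≤ ((prefixUpTo γ (P n)).map d).sum ∧
  ∀ i : Fin m, b i = true →
    (∃ x ∈ prefixUpTo γ (P n), tgt x = some i) ∨
    (∃ j, 1 ≤ j ∧ j < n ∧ ∃ x ∈ P j, tgt x = some i)

/-- Substitutability is preserved when starting a new tour: if
`(γ, t, σ, b, n)` is substitutable into `P`, `n < M`, and `γ` is the
second-to-last element of `Γⁿ`, then `(γ₀, 0, 0, b, n+1)` is substitutable. -/
theorem stmt14 {Node : Type*} [DecidableEq Node] {m : ℕ} (M : ℕ)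
    (P : ℕ → List Node) (Intc : List Node → Node → ℝ → Prop)
    (d : Node → ℝ) (tgt : Node → Option (Fin m)) (γ₀ : Node)
    (hd : ∀ x, 0 ≤ d x)
    (hIntc0 : ∀ j, 1 ≤ j → j ≤ M → Intc (P j) γ₀ 0)
    (hγ₀mem : ∀ j, 1 ≤ j → j ≤ M → γ₀ ∈ P j)
    (γ : Node) (t σ : ℝ) (b : Fin m → Bool) (n : ℕ)
    (hsub : Substitutable M P Intc d tgt γ t σ b n)
    (hn : n < M)
    (hstl : ∃ (pre : List Node) (x : Node), P n = pre ++ [γ, x]) :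
    Substitutable M P Intc d tgt γ₀ 0 0 b (n + 1) := by
  obtain ⟨h1, hM, hmem, hI, hσ, hb⟩ := hsub
  have hn1 : 1 ≤ n + 1 := by omega
  have hM1 : n + 1 ≤ M := hn
  refine ⟨hn1, hM1, hγ₀mem _ hn1 hM1, hIntc0 _ hn1 hM1, ?_, ?_⟩
  · exact List.sum_nonneg (by
      intro x hx
      obtain ⟨y, _, rfl⟩ := List.mem_map.mp hx
      exact hd y)
  · intro i hi
    rcases hb i hi with ⟨x, hx, htgt⟩ | ⟨j, hj1, hjn, hx⟩
    · right
      refine ⟨n, h1, by omega, x, ?_, htgt⟩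
      rcases List.mem_append.mp hx with h | h
      · exact List.takeWhile_subset _ h
      · simpa using List.mem_singleton.mp h ▸ hmem
    · exact Or.inr ⟨j, hj1, by omega, hx⟩
end

section
/- Capacity and visitation feasibility of spliced tours: let Γ and Γ′ be partial tours with target-visit sets V(Γ) and V(Γ′) and demands σ = Σ_{i∈V(Γ)} dᵢ, σ′ = Σ_{i∈V(Γ′)} dᵢ. Let T′ = Γ′ · E be a tour (so V(Γ′) ∩ V(E) = ∅ and σ′ + Σ_{i∈V(E)} dᵢ ≤ d_max). If V(Γ) ⊆ V(Γ′) ∪ (targets unvisitable after Γ, none of which are in V(E)) — in particular if the blocked-vector condition b_Γ ≤ b_{Γ′} holds pointwise — and σ ≤ σ′, then T = Γ · E is also a tour: it visits each target at most once and its total demand σ + Σ_{i∈V(E)} dᵢ is at most d_max. -/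
/-- Capacity and visitation feasibility of spliced tours: if `T' = Γ' ++ E`
visits each target at most once with total demand `≤ d_max`, `Γ` visits each
target at most once with accumulated demand at most that of `Γ'`, and the
blocked-vector condition `b_Γ ≤ b_{Γ'}` holds (with `b_Γ` marking the targets
of `Γ` and `b_{Γ'}`-marked targets absent from `E`), then `T = Γ ++ E` also
visits each target at most once with total demand `≤ d_max`. -/
theorem stmt18 {Node : Type*} {m : ℕ}
    (tgt : Node → Option (Fin m)) (d : Fin m → ℝ) (dmax : ℝ)
    (hd : ∀ i, 0 ≤ d i)
    (Γ Γ' E : List Node) (bΓ bΓ' : Fin m → Bool)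
    (hΓnodup : (Γ.filterMap tgt).Nodup)
    (hT'nodup : ((Γ' ++ E).filterMap tgt).Nodup)
    (hT'cap : (((Γ' ++ E).filterMap tgt).map d).sum ≤ dmax)
    (hσ : ((Γ.filterMap tgt).map d).sum ≤ ((Γ'.filterMap tgt).map d).sum)
    (hbmono : ∀ i, bΓ i = true → bΓ' i = true)
    (hbΓ : ∀ i ∈ Γ.filterMap tgt, bΓ i = true)
    (hbΓ' : ∀ i, bΓ' i = true → i ∉ E.filterMap tgt) :
    ((Γ ++ E).filterMap tgt).Nodup ∧
    (((Γ ++ E).filterMap tgt).map d).sum ≤ dmax := by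
  rw [List.filterMap_append] at *
  have hdisj : List.Disjoint (Γ.filterMap tgt) (E.filterMap tgt) := by
    intro i hi hiE
    exact hbΓ' i (hbmono i (hbΓ i hi)) hiE
  have hEnodup : (E.filterMap tgt).Nodup := (List.nodup_append.mp hT'nodup).2.1
  constructor
  · exact List.nodup_append'.mpr ⟨hΓnodup, hEnodup, hdisj⟩
  · rw [List.map_append, List.sum_append] at hT'cap ⊢
    linarith
end
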